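/- arXiv:1903.06523 — 2 statements merged into one kernel-verified Lean document; each statement's English description precedes it below -/
import Mathlib

section
/- Let μ : ℕ → ℤ satisfy μ(k) > −n for all k ≥ 1 and suppose there exist integers d, k_γ and ℓ₀ ∈ ℕ such that: (a) μ(k_γ ± ℓ) = d ± μ(ℓ) for all 1 ≤ ℓ ≤ ℓ₀; (b) d − n ≤ μ(k_γ) ≤ d; (c) μ(k_γ − ℓ) < μ(k_γ) − 2n and μ(k_γ + ℓ) > μ(k_γ) + 2n for all ℓ ≥ ℓ₀. Then any k with μ(k) = d + n satisfies k = k_γ + ℓ for some ℓ with 1 ≤ ℓ < ℓ₀. -/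
/-!
Write `k = kγ + ℓ`. Iterates at or below `kγ` have index below `d + n`: at `kγ` by (b); within
`ℓ₀` below it because `μ (kγ - ℓ) = d - μ ℓ` and `μ ℓ > -n`; further down by (c). Iterates at
`kγ + ℓ` with `ℓ ≥ ℓ₀` have index above `μ kγ + 2n ≥ d + n` by (b) and (c). Only `0 < ℓ < ℓ₀` is left.
-/

theorem apply_sub_lt_add_of_nonneg {μ : ℤ → ℤ} {d kγ ℓ₀ m : ℤ} (hm : 0 < m)
    (hpos : ∀ k, 1 ≤ k → -m < μ k)
    (ha : ∀ ℓ, 1 ≤ ℓ → ℓ ≤ ℓ₀ → μ (kγ - ℓ) = d - μ ℓ)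
    (hb : μ kγ ≤ d) (hc : ∀ ℓ, ℓ₀ ≤ ℓ → μ (kγ - ℓ) < μ kγ - 2 * m)
    {ℓ : ℤ} (hℓ : 0 ≤ ℓ) : μ (kγ - ℓ) < d + m := by
  rcases hℓ.eq_or_lt with rfl | hℓ
  · rw [sub_zero]
    linarith
  · rcases le_total ℓ ℓ₀ with hle | hge
    · rw [ha ℓ hℓ hle]
      linarith [hpos ℓ hℓ]
    · linarith [hc ℓ hge]

theorem stmt_1_general (n : ℕ) (hn : 0 < n) (μ : ℤ → ℤ) (d : ℤ) (kγ : ℤ) (ℓ₀ : ℤ)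
    (hpos : ∀ k : ℤ, 1 ≤ k → -(n : ℤ) < μ k)
    (ha : ∀ ℓ : ℤ, 1 ≤ ℓ → ℓ ≤ ℓ₀ → μ (kγ + ℓ) = d + μ ℓ ∧ μ (kγ - ℓ) = d - μ ℓ)
    (hb₁ : d - n ≤ μ kγ) (hb₂ : μ kγ ≤ d)
    (hc : ∀ ℓ : ℤ, ℓ₀ ≤ ℓ → μ (kγ - ℓ) < μ kγ - 2 * n ∧ μ kγ + 2 * n < μ (kγ + ℓ)) :
    ∀ k : ℤ, 1 ≤ k → μ k = d + n → ∃ ℓ : ℤ, 1 ≤ ℓ ∧ ℓ < ℓ₀ ∧ k = kγ + ℓ := by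
  intro k _ hμ
  obtain ⟨ℓ, rfl⟩ : ∃ ℓ, k = kγ + ℓ := ⟨k - kγ, by ring⟩
  refine ⟨ℓ, ?_, ?_, rfl⟩
  · by_contra! hℓ
    have hbelow := apply_sub_lt_add_of_nonneg (by exact_mod_cast hn) hpos
      (fun ℓ h₁ h₂ => (ha ℓ h₁ h₂).2) hb₂ (fun ℓ h => (hc ℓ h).1) (ℓ := -ℓ) (by omega)
    rw [sub_neg_eq_add, hμ] at hbelow
    exact lt_irrefl _ hbelow
  · by_contra! hℓ
    linarith [(hc ℓ hℓ).2]

/-- Lemma 3.3: index-counting lemma. -/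
theorem stmt_1 (n : ℕ) (hn : 0 < n) (μ : ℤ → ℤ) (d : ℤ) (kγ : ℤ) (ℓ₀ : ℤ) (hℓ₀ : 1 ≤ ℓ₀)
    (hpos : ∀ k : ℤ, 1 ≤ k → -(n : ℤ) < μ k)
    (ha : ∀ ℓ : ℤ, 1 ≤ ℓ → ℓ ≤ ℓ₀ → μ (kγ + ℓ) = d + μ ℓ ∧ μ (kγ - ℓ) = d - μ ℓ)
    (hb₁ : d - n ≤ μ kγ) (hb₂ : μ kγ ≤ d)
    (hc : ∀ ℓ : ℤ, ℓ₀ ≤ ℓ → μ (kγ - ℓ) < μ kγ - 2 * n ∧ μ kγ + 2 * n < μ (kγ + ℓ)) :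
    ∀ k : ℤ, 1 ≤ k → μ k = d + n → ∃ ℓ : ℤ, 1 ≤ ℓ ∧ ℓ < ℓ₀ ∧ k = kγ + ℓ :=
  stmt_1_general n hn μ d kγ ℓ₀ hpos ha hb₁ hb₂ hc
end

section
/- Consider the formal power series P(t) = t^{d−1} · (1/(1−t²) + t^{d(h+1)−2}/(1−t^{d(h+1)−2})) · (1−t^{dh})/(1−t^d), where d ≥ 2 is even and h ≥ 1. Then the coefficient of t^{dh−1} in P equals h, and the coefficient of t^{dh−1+j(d(h+1)−2)} equals h+1 for every j ≥ 1. -/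
/-!
`(1 - t^{dh}) / (1 - t^d) = ∑_{i<h} t^{di}`, so `P` is the sum over `i < h` of
`t^{d-1+di}` times `S = 1/(1-t²) + t^m/(1-t^m)` with `m = d(h+1) - 2`, and `S` counts
even exponents plus positive multiples of `m`. At `n = dh - 1 + jm` the `i`-th summand
contributes the coefficient of `t^{d(h-1-i) + jm}` in `S`. Since `d` and `m` are even this
exponent is always even, and since `0 ≤ d(h-1-i) < m` it is a positive multiple of `m` exactly
when `i = h - 1` and `j ≥ 1`.
-/

open PowerSeries Finset

/-- Rademacher's Poincaré series of `(ΛN/S¹, N)` in the even-degree case. -/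
noncomputable def rademacherSeriesEven (d h : ℕ) : PowerSeries ℚ :=
  X ^ (d - 1) * ((1 - X ^ 2)⁻¹ + X ^ (d * (h + 1) - 2) * (1 - X ^ (d * (h + 1) - 2))⁻¹) *
    ((1 - X ^ (d * h)) * (1 - X ^ d)⁻¹)

theorem Nat.dvd_add_mul_self_and_ne_zero_iff {a m : ℕ} (ham : a < m) (j : ℕ) :
    m ∣ a + j * m ∧ a + j * m ≠ 0 ↔ a = 0 ∧ j ≠ 0 := by
  rw [Nat.dvd_add_left (dvd_mul_left m j)]
  constructor
  · rintro ⟨hdvd, hne⟩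
    obtain rfl := Nat.eq_zero_of_dvd_of_lt hdvd ham
    exact ⟨rfl, by rintro rfl; simp at hne⟩
  · rintro ⟨rfl, hj⟩
    exact ⟨dvd_zero m, by positivity⟩

namespace PowerSeries

variable {K : Type*} [Field K]

theorem constantCoeff_one_sub_X_pow_ne_zero {k : ℕ} (hk : k ≠ 0) :
    constantCoeff (1 - X ^ k : K⟦X⟧) ≠ 0 := by
  simp [zero_pow hk]

theorem coeff_inv_one_sub_X_pow {k : ℕ} (hk : k ≠ 0) (n : ℕ) :
    coeff n (1 - X ^ k : K⟦X⟧)⁻¹ = if k ∣ n then 1 else 0 := by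
  suffices (1 - X ^ k : K⟦X⟧)⁻¹ = mk fun n => if k ∣ n then 1 else 0 by rw [this, coeff_mk]
  rw [inv_eq_iff_mul_eq_one (constantCoeff_one_sub_X_pow_ne_zero hk)]
  ext n
  rw [mul_sub, mul_one, map_sub, coeff_mul_X_pow', coeff_mk, coeff_one]
  by_cases hkn : k ≤ n
  · simp only [if_pos hkn, coeff_mk, Nat.dvd_sub_iff_left hkn dvd_rfl, sub_self,
      if_neg (by omega : n ≠ 0)]
  · rcases Nat.eq_zero_or_pos n with rfl | hn
    · simp [hk]
    · rw [if_neg hkn, if_neg (fun h => hkn (Nat.le_of_dvd hn h)), if_neg hn.ne', sub_zero]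

theorem coeff_X_pow_mul_inv_one_sub_X_pow {k : ℕ} (hk : k ≠ 0) (n : ℕ) :
    coeff n (X ^ k * (1 - X ^ k : K⟦X⟧)⁻¹) = if k ∣ n ∧ n ≠ 0 then 1 else 0 := by
  rw [coeff_X_pow_mul']
  by_cases hkn : k ≤ n
  · simp only [if_pos hkn, coeff_inv_one_sub_X_pow hk, Nat.dvd_sub_iff_left hkn dvd_rfl, ne_eq,
      show n ≠ 0 by omega, not_false_eq_true, and_true]
  · rw [if_neg hkn, if_neg]
    rintro ⟨hdvd, hn⟩
    exact hkn (Nat.le_of_dvd (Nat.pos_of_ne_zero hn) hdvd)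

theorem mul_inv_one_sub_X_pow_eq_sum {d : ℕ} (hd : d ≠ 0) (h : ℕ) :
    (1 - X ^ (d * h)) * (1 - X ^ d : K⟦X⟧)⁻¹ = ∑ i ∈ range h, X ^ (d * i) := by
  rw [eq_comm, eq_mul_inv_iff_mul_eq (constantCoeff_one_sub_X_pow_ne_zero hd)]
  simp_rw [pow_mul]
  exact geom_sum_mul_neg _ _

theorem coeff_inv_one_sub_X_sq_add_X_pow_mul_inv_one_sub_X_pow {a m : ℕ}
    (ha : Even a) (hm : Even m) (ham : a < m) (j : ℕ) :
    coeff (a + j * m) ((1 - X ^ 2 : K⟦X⟧)⁻¹ + X ^ m * (1 - X ^ m)⁻¹) =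
      1 + if a = 0 ∧ j ≠ 0 then 1 else 0 := by
  have hm0 : m ≠ 0 := by omega
  have heven : 2 ∣ a + j * m := (ha.add (hm.mul_left j)).two_dvd
  rw [map_add, coeff_inv_one_sub_X_pow two_ne_zero, if_pos heven,
    coeff_X_pow_mul_inv_one_sub_X_pow hm0]
  simp only [Nat.dvd_add_mul_self_and_ne_zero_iff ham]

end PowerSeries

theorem rademacherSeriesEven_eq_sum {d : ℕ} (hd : d ≠ 0) (h : ℕ) :
    rademacherSeriesEven d h = ∑ i ∈ range h, X ^ (d - 1 + d * i) *
      ((1 - X ^ 2)⁻¹ + X ^ (d * (h + 1) - 2) * (1 - X ^ (d * (h + 1) - 2))⁻¹) := by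
  simp_rw [rademacherSeriesEven, mul_inv_one_sub_X_pow_eq_sum hd, mul_sum, pow_add]
  exact sum_congr rfl fun i _ => by ring

theorem coeff_rademacherSeriesEven {d h : ℕ} (hd : 2 ≤ d) (hde : Even d) (hh : 1 ≤ h)
    (j : ℕ) :
    coeff (d * h - 1 + j * (d * (h + 1) - 2)) (rademacherSeriesEven d h) =
      h + if j = 0 then 0 else 1 := by
  set m := d * (h + 1) - 2
  set S : ℚ⟦X⟧ := (1 - X ^ 2)⁻¹ + X ^ m * (1 - X ^ m)⁻¹
  have hm : Even m := (hde.mul_right _).tsub even_two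
  have hm_eq : m + 2 = d * h + d := by
    have : d ≤ d * h := Nat.le_mul_of_pos_right d hh
    simp only [m, mul_add_one]
    omega
  have shift : ∀ i ∈ range h, coeff (d * h - 1 + j * m) (X ^ (d - 1 + d * i) * S) =
      coeff (d * (h - 1 - i) + j * m) S := by
    intro i hi
    have hdh : d * (h - 1 - i) + d * i + d = d * h := by
      rw [← mul_add, ← mul_add_one, show h - 1 - i + i + 1 = h by grind]
    rw [coeff_X_pow_mul', if_pos (by omega)]
    congr 2
    omega
  rw [rademacherSeriesEven_eq_sum (by omega), map_sum, sum_congr rfl shift,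
    sum_range_reflect (fun i => coeff (d * i + j * m) S) h]
  obtain ⟨k, rfl⟩ : ∃ k, h = k + 1 := ⟨h - 1, by omega⟩
  have hcoeff : ∀ i < k + 1,
      coeff (d * i + j * m) S = 1 + if d * i = 0 ∧ j ≠ 0 then 1 else 0 := by
    intro i hi
    have him : d * i < m := by
      have : d * (i + 1) ≤ d * (k + 1) := Nat.mul_le_mul_left d hi
      rw [mul_add_one] at this
      omega
    exact coeff_inv_one_sub_X_sq_add_X_pow_mul_inv_one_sub_X_pow (hde.mul_right i) hm him j
  rw [sum_range_succ', hcoeff 0 k.succ_pos,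
    sum_congr rfl fun i hi => hcoeff (i + 1) (by simpa using hi)]
  simp only [show d ≠ 0 by omega, mul_eq_zero, mul_zero, Nat.add_one_ne_zero, or_self, false_and,
    if_false, add_zero, sum_const, card_range, true_and, ite_not]
  push_cast
  ring

/-- the coefficient of `t^{dh-1}` equals `h` and the coefficient of
`t^{dh-1+j(d(h+1)-2)}` equals `h+1` for every `j ≥ 1`. -/
theorem stmt_8 (d h : ℕ) (hd : 2 ≤ d) (hde : Even d) (hh : 1 ≤ h) :
    (coeff (R := ℚ) (d * h - 1)) (rademacherSeriesEven d h) = (h : ℚ) ∧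
      ∀ j : ℕ, 1 ≤ j →
        (coeff (R := ℚ) (d * h - 1 + j * (d * (h + 1) - 2))) (rademacherSeriesEven d h)
          = (h : ℚ) + 1 := by
  refine ⟨by simpa using coeff_rademacherSeriesEven hd hde hh 0, fun j hj => ?_⟩
  simpa [show j ≠ 0 by omega] using coeff_rademacherSeriesEven hd hde hh j
end
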